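/- Let d ≥ 2 and let Δ be a nonzero traceless Hermitian matrix on C^d ⊗ C^d. Then there exist a PPT state ρ on C^d ⊗ C^d and a real number λ such that ρ + λΔ is an NPT state. -/

import Mathlib

open Matrix
open scoped ComplexOrder

noncomputable section

/-- A state (density matrix): positive semidefinite with trace 1. -/
def IsState {n : Type*} [Fintype n] (ρ : Matrix n n ℂ) : Prop :=
  ρ.PosSemidef ∧ ρ.trace = 1

/-- Partial transpose with respect to the second tensor factor. -/
def ptrans {d : ℕ} (ρ : Matrix (Fin d × Fin d) (Fin d × Fin d) ℂ) :
    Matrix (Fin d × Fin d) (Fin d × Fin d) ℂ :=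
  Matrix.of fun p q => ρ (p.1, q.2) (q.1, p.2)

/-!
Choose an entangled vector `v` with `⟨v, Δ^τ v⟩ < 0`: the partial transpose `Δ^τ` is a nonzero
traceless Hermitian matrix, hence not positive semidefinite, and an entangled vector is found
near any vector on which its form is negative. For entangled `v`, the form of `(v v*)^τ` is
strictly below `‖v‖² ‖x‖²` (Cauchy–Schwarz via the Lagrange identity, strict because `v` has a
nonzero `2 × 2` minor), so `M = (‖v‖² 1 - v v*)^τ` is positive definite, while
`M^τ = ‖v‖² 1 - v v*` is positive semidefinite and kills `v`. Normalising, `ρ = M / tr M` is a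
PPT state, `ρ + λΔ` is still a state for small `λ > 0` because `ρ` is positive definite, and
`⟨v, (ρ + λΔ)^τ v⟩ = λ ⟨v, Δ^τ v⟩ < 0`.
-/

open Complex Finset
open scoped ComplexConjugate MatrixOrder

section Sums

variable {ι : Type*} [Fintype ι]

lemma lagrange_identity (a b : ι → ℂ) :
    (∑ l, normSq (a l)) * (∑ l, normSq (b l)) =
      normSq (∑ l, a l * b l) + (∑ l, ∑ m, normSq (a l * conj (b m) - a m * conj (b l))) / 2 := by
  have hminor : ∀ l m, normSq (a l * conj (b m) - a m * conj (b l)) =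
      normSq (a l) * normSq (b m) + normSq (a m) * normSq (b l) -
        2 * (a l * b l * conj (a m * b m)).re := by
    intro l m
    rw [normSq_sub, normSq_mul, normSq_mul, normSq_conj, normSq_conj]
    congr 2
    simp only [map_mul, conj_conj]
    ring_nf
  have hcross : ∑ l, ∑ m, (a l * b l * conj (a m * b m)).re = normSq (∑ l, a l * b l) := by
    rw [← ofReal_re (normSq _), ← mul_conj, map_sum, sum_mul_sum, re_sum]
    simp only [re_sum]
  simp only [hminor, sum_sub_distrib, sum_add_distrib, ← mul_sum, ← sum_mul, hcross]
  ring

lemma normSq_sum_mul_le (a b : ι → ℂ) :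
    normSq (∑ l, a l * b l) ≤ (∑ l, normSq (a l)) * ∑ l, normSq (b l) := by
  rw [lagrange_identity]
  have : 0 ≤ ∑ l, ∑ m, normSq (a l * conj (b m) - a m * conj (b l)) :=
    sum_nonneg fun _ _ => sum_nonneg fun _ _ => normSq_nonneg _
  linarith

lemma re_sum_mul_conj_swap_le (m : ι → ι → ℂ) :
    (∑ i, ∑ j, m i j * conj (m j i)).re ≤ ∑ i, ∑ j, normSq (m i j) := by
  have h : 0 ≤ ∑ i, ∑ j, normSq (m i j - m j i) :=
    sum_nonneg fun _ _ => sum_nonneg fun _ _ => normSq_nonneg _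
  simp only [normSq_sub, sum_sub_distrib, sum_add_distrib, ← mul_sum] at h
  rw [sum_comm (f := fun i j => normSq (m j i))] at h
  simp only [re_sum]
  linarith

lemma star_dotProduct_self (x : ι → ℂ) : star x ⬝ᵥ x = ((∑ p, normSq (x p) : ℝ) : ℂ) := by
  simp only [dotProduct, Pi.star_apply, star_def, ofReal_sum, ← mul_conj, mul_comm]

end Sums

namespace Matrix

variable {n : Type*} [Fintype n] {A : Matrix n n ℂ}

lemma IsHermitian.exists_re_dotProduct_lt_zero (hA : A.IsHermitian) (h : ¬A.PosSemidef) :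
    ∃ x, (star x ⬝ᵥ A *ᵥ x).re < 0 := by
  by_contra! hx
  exact h <| .of_dotProduct_mulVec_nonneg hA fun x =>
    nonneg_iff.2 ⟨hx x, (hA.im_star_dotProduct_mulVec_self x).symm⟩

lemma IsHermitian.posDef_of_re_dotProduct_pos (hA : A.IsHermitian)
    (h : ∀ x ≠ 0, 0 < (star x ⬝ᵥ A *ᵥ x).re) : A.PosDef :=
  .of_dotProduct_mulVec_pos hA fun x hx =>
    pos_iff.2 ⟨h x hx, (hA.im_star_dotProduct_mulVec_self x).symm⟩

theorem PosDef.exists_pos_posSemidef_add_smul [DecidableEq n] [Nonempty n] {B : Matrix n n ℂ}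
    (hA : A.PosDef) (hB : B.IsHermitian) : ∃ t : ℝ, 0 < t ∧ (A + (t : ℂ) • B).PosSemidef := by
  obtain ⟨r, hr, hrA⟩ : ∃ r > 0, algebraMap ℝ _ r ≤ A :=
    (CFC.exists_pos_algebraMap_le_iff hA.isHermitian).2 fun x hx => by
      obtain ⟨i, rfl⟩ := hA.isHermitian.spectrum_real_eq_range_eigenvalues ▸ hx
      exact hA.eigenvalues_pos i
  obtain ⟨m, hm⟩ : BddBelow (spectrum ℝ B) :=
    hB.spectrum_real_eq_range_eigenvalues ▸ (Set.finite_range _).bddBelow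
  have hmB : algebraMap ℝ _ m ≤ B := algebraMap_le_of_le_spectrum hm hB
  set t := r / (|m| + 1)
  have ht : 0 < t := by positivity
  have hrm : 0 ≤ r + t * m := by
    have : t * (|m| + 1) = r := div_mul_cancel₀ r (by positivity)
    nlinarith [neg_abs_le m]
  refine ⟨t, ht, ?_⟩
  rw [← nonneg_iff_posSemidef, Complex.coe_smul]
  calc 0 ≤ algebraMap ℝ (Matrix n n ℂ) (r + t * m) := algebraMap_nonneg _ hrm
    _ = algebraMap ℝ _ r + t • algebraMap ℝ _ m := by rw [map_add, map_mul, Algebra.smul_def]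
    _ ≤ A + t • B := add_le_add hrA (smul_le_smul_of_nonneg_left hmB ht.le)

end Matrix

section PartialTranspose

variable {d : ℕ} (A B : Matrix (Fin d × Fin d) (Fin d × Fin d) ℂ)

@[simp] lemma ptrans_ptrans : ptrans (ptrans A) = A := rfl

lemma ptrans_injective : Function.Injective (ptrans (d := d)) :=
  Function.LeftInverse.injective ptrans_ptrans

@[simp] lemma ptrans_zero : ptrans (0 : Matrix (Fin d × Fin d) (Fin d × Fin d) ℂ) = 0 := rfl

lemma ptrans_add : ptrans (A + B) = ptrans A + ptrans B := rfl

lemma ptrans_sub : ptrans (A - B) = ptrans A - ptrans B := rfl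

lemma ptrans_smul (c : ℂ) : ptrans (c • A) = c • ptrans A := rfl

@[simp] lemma ptrans_one : ptrans (1 : Matrix (Fin d × Fin d) (Fin d × Fin d) ℂ) = 1 := by
  ext ⟨i, k⟩ ⟨j, l⟩
  simp only [ptrans, of_apply, one_apply, Prod.mk.injEq]
  grind

lemma trace_ptrans : (ptrans A).trace = A.trace := rfl

variable {A} in
lemma Matrix.IsHermitian.ptrans (hA : A.IsHermitian) : (ptrans A).IsHermitian := by
  ext p q
  exact congrFun (congrFun hA (p.1, q.2)) (q.1, p.2)

variable {A} in
lemma not_posSemidef_ptrans (hA0 : A ≠ 0) (hAtr : A.trace = 0) : ¬(ptrans A).PosSemidef :=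
  fun h => hA0 <| ptrans_injective <| by
    rw [ptrans_zero, ← h.trace_eq_zero_iff, trace_ptrans, hAtr]

end PartialTranspose

section Entanglement

open scoped Topology

variable {ι κ : Type*}

/-- `v ∈ ℂ^ι ⊗ ℂ^κ` is entangled: its coefficient matrix `(v (i, k))` has a nonzero `2 × 2`
minor, i.e. Schmidt rank at least two. -/
def IsEntangled (v : ι × κ → ℂ) : Prop :=
  ∃ i i' k k', v (i, k) * v (i', k') ≠ v (i, k') * v (i', k)

lemma IsEntangled.exists_mul_sub_ne_zero {v : ι × κ → ℂ} (hv : IsEntangled v) {w : κ → ℂ}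
    (hw : w ≠ 0) : ∃ i l r, v (i, l) * w r - v (i, r) * w l ≠ 0 := by
  by_contra! h
  obtain ⟨s, hs⟩ := Function.ne_iff.mp hw
  obtain ⟨i, i', k, k', hik⟩ := hv
  refine hik (mul_right_cancel₀ (pow_ne_zero 2 hs) ?_)
  linear_combination (v (i', k') * w s) * h i k s + (v (i, s) * w k) * h i' k' s -
    (v (i', k) * w s) * h i k' s - (v (i, s) * w k') * h i' k s

variable [Fintype ι] [Fintype κ] [DecidableEq ι] [DecidableEq κ]

lemma exists_isEntangled_re_dotProduct_lt_zero [Nontrivial ι] [Nontrivial κ]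
    (T : Matrix (ι × κ) (ι × κ) ℂ) {y : ι × κ → ℂ} (hy : (star y ⬝ᵥ T *ᵥ y).re < 0) :
    ∃ v, IsEntangled v ∧ (star v ⬝ᵥ T *ᵥ v).re < 0 := by
  by_cases hyE : IsEntangled y
  · exact ⟨y, hyE, hy⟩
  obtain ⟨⟨i, k⟩, hik⟩ : ∃ p, y p ≠ 0 := Function.ne_iff.mp (show y ≠ 0 by rintro rfl; simp at hy)
  obtain ⟨i', hi'⟩ := exists_ne i
  obtain ⟨k', hk'⟩ := exists_ne k
  -- moving `y (i', k')` changes the minor on rows `i, i'` and columns `k, k'` at rate `y (i, k)`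
  set e : ι × κ → ℂ := Pi.single (i', k') 1
  have hcont : Continuous fun t : ℝ => (star (y + (t : ℂ) • e) ⬝ᵥ T *ᵥ (y + (t : ℂ) • e)).re := by
    fun_prop
  have hnear : ∀ᶠ t : ℝ in 𝓝 0, (star (y + (t : ℂ) • e) ⬝ᵥ T *ᵥ (y + (t : ℂ) • e)).re < 0 :=
    (hcont.tendsto 0).eventually (gt_mem_nhds (by simpa using hy))
  obtain ⟨t, hneg, ht⟩ := (eventually_nhdsWithin_of_eventually_nhds hnear).and
    (self_mem_nhdsWithin (s := {0}ᶜ)) |>.exists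
  refine ⟨y + (t : ℂ) • e, ⟨i, i', k, k', ?_⟩, hneg⟩
  have hprod : y (i, k) * y (i', k') = y (i, k') * y (i', k) := by
    by_contra h
    exact hyE ⟨i, i', k, k', h⟩
  simp only [e, Pi.add_apply, Pi.smul_apply, Pi.single_apply, Prod.mk.injEq, hi'.symm, hk'.symm,
    and_self, and_true, and_false, if_true, if_false, smul_eq_mul, mul_one, mul_zero,
    add_zero]
  intro h
  have : y (i, k) * t = 0 := by linear_combination h - hprod
  exact mul_ne_zero hik (ofReal_ne_zero.mpr ht) this

end Entanglement

section Contraction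

variable {ι κ : Type*} [Fintype ι] [Fintype κ]

lemma sum_normSq_contract_add_sum_normSq_minor (v x : ι × κ → ℂ) :
    ∑ i, ∑ j, normSq (∑ l, v (i, l) * x (j, l)) +
        (∑ i, ∑ j, ∑ l, ∑ r, normSq (v (i, l) * conj (x (j, r)) - v (i, r) * conj (x (j, l)))) / 2 =
      (∑ p, normSq (v p)) * ∑ p, normSq (x p) := by
  rw [Fintype.sum_prod_type, Fintype.sum_prod_type, sum_mul_sum]
  simp only [lagrange_identity, sum_add_distrib, sum_div]

lemma IsEntangled.sum_normSq_minor_pos {v x : ι × κ → ℂ} (hv : IsEntangled v) (hx : x ≠ 0) :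
    0 < ∑ i, ∑ j, ∑ l, ∑ r, normSq (v (i, l) * conj (x (j, r)) - v (i, r) * conj (x (j, l))) := by
  obtain ⟨⟨j, s⟩, hjs⟩ := Function.ne_iff.mp hx
  have hrow : (fun k => conj (x (j, k))) ≠ 0 := fun h => hjs (by simpa using congrFun h s)
  obtain ⟨i, l, r, hilr⟩ := hv.exists_mul_sub_ne_zero hrow
  refine sum_pos' (fun _ _ => ?_) ⟨i, mem_univ _, sum_pos' (fun _ _ => ?_) ⟨j, mem_univ _,
    sum_pos' (fun _ _ => ?_) ⟨l, mem_univ _, sum_pos' (fun _ _ => ?_) ⟨r, mem_univ _,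
      normSq_pos.2 hilr⟩⟩⟩⟩ <;>
  simp only [normSq_eq_norm_sq] <;> positivity

end Contraction

lemma star_dotProduct_ptrans_vecMulVec_mulVec {d : ℕ} (v x : Fin d × Fin d → ℂ) :
    star x ⬝ᵥ ptrans (vecMulVec v (star v)) *ᵥ x =
      ∑ i, ∑ j, (∑ l, v (i, l) * x (j, l)) * conj (∑ k, v (j, k) * x (i, k)) := by
  simp only [dotProduct, mulVec, ptrans, vecMulVec, of_apply, Pi.star_apply, star_def,
    Fintype.sum_prod_type, map_sum, map_mul, sum_mul, mul_sum]
  refine sum_congr rfl fun i _ => ?_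
  rw [sum_comm]
  exact sum_congr rfl fun j _ => sum_congr rfl fun k _ => sum_congr rfl fun l _ => by ring

theorem IsEntangled.re_star_dotProduct_ptrans_vecMulVec_mulVec_lt {d : ℕ}
    {v x : Fin d × Fin d → ℂ} (hv : IsEntangled v) (hx : x ≠ 0) :
    (star x ⬝ᵥ ptrans (vecMulVec v (star v)) *ᵥ x).re <
      (∑ p, normSq (v p)) * ∑ p, normSq (x p) := by
  rw [star_dotProduct_ptrans_vecMulVec_mulVec, ← sum_normSq_contract_add_sum_normSq_minor]
  have := hv.sum_normSq_minor_pos hx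
  have := re_sum_mul_conj_swap_le fun i j => ∑ l, v (i, l) * x (j, l)
  linarith

section ScaledOrthProj

variable {n : Type*} [Fintype n] [DecidableEq n]

def scaledOrthProj (v : n → ℂ) : Matrix n n ℂ :=
  ((∑ p, normSq (v p) : ℝ) : ℂ) • 1 - vecMulVec v (star v)

lemma scaledOrthProj_mulVec (v x : n → ℂ) :
    scaledOrthProj v *ᵥ x = ((∑ p, normSq (v p) : ℝ) : ℂ) • x - (star v ⬝ᵥ x) • v := by
  rw [scaledOrthProj, sub_mulVec, smul_mulVec, one_mulVec, vecMulVec_mulVec, op_smul_eq_smul]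

lemma isHermitian_scaledOrthProj (v : n → ℂ) : (scaledOrthProj v).IsHermitian :=
  (isHermitian_one.smul (conj_ofReal _)).sub (posSemidef_vecMulVec_self_star v).isHermitian

lemma scaledOrthProj_mulVec_self (v : n → ℂ) : scaledOrthProj v *ᵥ v = 0 := by
  rw [scaledOrthProj_mulVec, star_dotProduct_self, sub_self]

lemma posSemidef_scaledOrthProj (v : n → ℂ) : (scaledOrthProj v).PosSemidef := by
  refine .of_dotProduct_mulVec_nonneg (isHermitian_scaledOrthProj v) fun x => ?_
  have hcs := normSq_sum_mul_le (star v) x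
  simp only [Pi.star_apply, star_def, normSq_conj] at hcs
  rw [scaledOrthProj_mulVec, dotProduct_sub, dotProduct_smul, dotProduct_smul, smul_eq_mul,
    smul_eq_mul, star_dotProduct_self, star_dotProduct (v := x), star_def, mul_conj,
    ← ofReal_mul, ← ofReal_sub, zero_le_real, sub_nonneg]
  exact hcs

end ScaledOrthProj

theorem IsEntangled.posDef_ptrans_scaledOrthProj {d : ℕ} {v : Fin d × Fin d → ℂ}
    (hv : IsEntangled v) : (ptrans (scaledOrthProj v)).PosDef := by
  refine (isHermitian_scaledOrthProj v).ptrans.posDef_of_re_dotProduct_pos fun x hx => ?_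
  have := hv.re_star_dotProduct_ptrans_vecMulVec_mulVec_lt hx
  rw [scaledOrthProj, ptrans_sub, ptrans_smul, ptrans_one, sub_mulVec, smul_mulVec, one_mulVec,
    dotProduct_sub, dotProduct_smul, smul_eq_mul, star_dotProduct_self, sub_re, ← ofReal_mul,
    ofReal_re]
  linarith

/-- A state is PPT if its partial transpose is positive semidefinite, NPT otherwise. -/
theorem stmt9 (d : ℕ) (hd : 2 ≤ d)
    (Δ : Matrix (Fin d × Fin d) (Fin d × Fin d) ℂ)
    (hΔ0 : Δ ≠ 0) (hΔH : Δ.IsHermitian) (hΔtr : Δ.trace = 0) :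
    ∃ (ρ : Matrix (Fin d × Fin d) (Fin d × Fin d) ℂ) (lam : ℝ),
      IsState ρ ∧ (ptrans ρ).PosSemidef ∧
        IsState (ρ + (lam : ℂ) • Δ) ∧ ¬ (ptrans (ρ + (lam : ℂ) • Δ)).PosSemidef := by
  have : Nontrivial (Fin d) := Fin.nontrivial_iff_two_le.mpr hd
  obtain ⟨y, hy⟩ := hΔH.ptrans.exists_re_dotProduct_lt_zero (not_posSemidef_ptrans hΔ0 hΔtr)
  obtain ⟨v, hv, hvΔ⟩ := exists_isEntangled_re_dotProduct_lt_zero (ptrans Δ) hy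
  set M := ptrans (scaledOrthProj v)
  have hM : M.PosDef := hv.posDef_ptrans_scaledOrthProj
  have hc : 0 < M.trace⁻¹ := inv_pos.mpr hM.trace_pos
  obtain ⟨t, ht, hρΔ⟩ := (hM.smul hc).exists_pos_posSemidef_add_smul hΔH
  refine ⟨M.trace⁻¹ • M, t, ⟨(hM.smul hc).posSemidef, ?_⟩, ?_, ⟨hρΔ, ?_⟩, fun h => ?_⟩
  · rw [trace_smul, smul_eq_mul, inv_mul_cancel₀ hM.trace_pos.ne']
  · rw [ptrans_smul, ptrans_ptrans]
    exact (posSemidef_scaledOrthProj v).smul hc.le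
  · rw [trace_add, trace_smul, trace_smul, hΔtr, smul_zero, add_zero, smul_eq_mul,
      inv_mul_cancel₀ hM.trace_pos.ne']
  · have := h.re_dotProduct_nonneg v
    rw [ptrans_add, ptrans_smul, ptrans_smul, ptrans_ptrans, add_mulVec, smul_mulVec, smul_mulVec,
      scaledOrthProj_mulVec_self, smul_zero, zero_add, dotProduct_smul, smul_eq_mul] at this
    have : 0 ≤ t * (star v ⬝ᵥ ptrans Δ *ᵥ v).re := by simpa using this
    linarith [mul_neg_of_pos_of_neg ht hvΔ]
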